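/- The singular sets of the dual flat fronts f = AA* and g = A e₃ A* coincide: f' × f_z̄ = 0 if and only if g' × g_z̄ = 0, and both are equivalent to λ(z) = |α(z)|² - |β(z)|² = 0 (given that A(z) is invertible). -/

import Mathlib

/-!
The cross product at base point `p` is equivariant under `p ↦ P p Q` for invertible `P`, `Q`.
Hence `f' × f_z̄` and `g' × g_z̄` are `A (·) Aᴴ` applied to the constant matrices `(i/2) λ e₃`
and `-(i/2) λ`, computed from `D Dᴴ - Dᴴ D = λ e₃` and `e₃² = 1`; since `A` is invertible and `e₃ ≠ 0`,
each density vanishes exactly where `λ` does.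
-/

open Matrix Complex ComplexConjugate

def e3 : Matrix (Fin 2) (Fin 2) ℂ := !![1, 0; 0, -1]

/-- `X × Y = (i/2)(X p⁻¹ Y - Y p⁻¹ X)` at base point `p`. -/
noncomputable def cross (p X Y : Matrix (Fin 2) (Fin 2) ℂ) :
    Matrix (Fin 2) (Fin 2) ℂ :=
  (Complex.I / 2) • (X * p⁻¹ * Y - Y * p⁻¹ * X)

lemma e3_mul_self : e3 * e3 = 1 := by
  ext i j; fin_cases i <;> fin_cases j <;> simp [e3]

lemma inv_e3 : e3⁻¹ = e3 :=
  inv_eq_right_inv e3_mul_self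

lemma e3_ne_zero : e3 ≠ 0 := fun h => by
  simpa [e3] using congrFun (congrFun h 0) 0

lemma cross_mul_mul {P Q p X Y : Matrix (Fin 2) (Fin 2) ℂ} (hP : IsUnit P) (hQ : IsUnit Q) :
    cross (P * p * Q) (P * X * Q) (P * Y * Q) = P * cross p X Y * Q := by
  have hP' : IsUnit P.det := (isUnit_iff_isUnit_det P).mp hP
  have hQ' : IsUnit Q.det := (isUnit_iff_isUnit_det Q).mp hQ
  have cancel : ∀ M N : Matrix (Fin 2) (Fin 2) ℂ,
      P * M * Q * (P * p * Q)⁻¹ * (P * N * Q) = P * (M * p⁻¹ * N) * Q := by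
    intro M N
    simp only [Matrix.mul_inv_rev, Matrix.mul_assoc,
      mul_nonsing_inv_cancel_left _ _ hQ', nonsing_inv_mul_cancel_left _ _ hP']
  simp only [cross, cancel, ← Matrix.mul_sub, ← Matrix.sub_mul, Matrix.mul_smul, Matrix.smul_mul]

lemma antidiag_conjTranspose (α β : ℂ) :
    !![0, α; β, 0]ᴴ = !![0, conj β; conj α, 0] := by
  ext i j; fin_cases i <;> fin_cases j <;> simp [conjTranspose_apply]

lemma cross_one_antidiag (α β : ℂ) :
    cross 1 !![0, α; β, 0] !![0, α; β, 0]ᴴ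
      = (Complex.I / 2 * (α * conj α - β * conj β)) • e3 := by
  rw [cross, inv_one, ← smul_smul, antidiag_conjTranspose]
  congr 1
  ext i j; fin_cases i <;> fin_cases j <;> simp [e3] <;> ring

lemma cross_e3_antidiag (α β : ℂ) :
    cross e3 (!![0, α; β, 0] * e3) (e3 * !![0, α; β, 0]ᴴ)
      = (Complex.I / 2 * -(α * conj α - β * conj β)) • 1 := by
  rw [cross, inv_e3, ← smul_smul, antidiag_conjTranspose]
  congr 1
  ext i j; fin_cases i <;> fin_cases j <;> simp [e3] <;> ring

lemma I_div_two_mul_smul_eq_zero_iff {n : Type*} {c : ℂ} {M : Matrix n n ℂ} (hM : M ≠ 0) :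
    (Complex.I / 2 * c) • M = 0 ↔ c = 0 := by
  rw [smul_eq_zero_iff_left hM, mul_eq_zero, or_iff_right (by simp [I_ne_zero])]

theorem singular_sets_coincide_general (A : Matrix (Fin 2) (Fin 2) ℂ) (hA : A.det = 1)
    (α β : ℂ) :
    (cross (A * Aᴴ) (A * !![0, α; β, 0] * Aᴴ) (A * (!![0, α; β, 0])ᴴ * Aᴴ) = 0
      ↔ cross (A * e3 * Aᴴ) (A * !![0, α; β, 0] * e3 * Aᴴ)
          (A * e3 * (!![0, α; β, 0])ᴴ * Aᴴ) = 0) ∧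
    (cross (A * Aᴴ) (A * !![0, α; β, 0] * Aᴴ) (A * (!![0, α; β, 0])ᴴ * Aᴴ) = 0
      ↔ α * conj α - β * conj β = 0) ∧
    (cross (A * e3 * Aᴴ) (A * !![0, α; β, 0] * e3 * Aᴴ)
          (A * e3 * (!![0, α; β, 0])ᴴ * Aᴴ) = 0
      ↔ α * conj α - β * conj β = 0) := by
  have hAu : IsUnit A := (isUnit_iff_isUnit_det A).mpr (hA ▸ isUnit_one)
  have hAHu : IsUnit Aᴴ := (isUnit_conjTranspose A).mpr hAu
  have conj_eq_zero : ∀ M : Matrix (Fin 2) (Fin 2) ℂ, A * M * Aᴴ = 0 ↔ M = 0 := fun M => by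
    rw [hAHu.mul_left_eq_zero, hAu.mul_right_eq_zero]
  have hf : cross (A * Aᴴ) (A * !![0, α; β, 0] * Aᴴ) (A * (!![0, α; β, 0])ᴴ * Aᴴ) = 0
      ↔ α * conj α - β * conj β = 0 := by
    have h := cross_mul_mul (p := 1) (X := !![0, α; β, 0]) (Y := !![0, α; β, 0]ᴴ) hAu hAHu
    rw [Matrix.mul_one] at h
    rw [h, conj_eq_zero, cross_one_antidiag, I_div_two_mul_smul_eq_zero_iff e3_ne_zero]
  have hg : cross (A * e3 * Aᴴ) (A * !![0, α; β, 0] * e3 * Aᴴ)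
          (A * e3 * (!![0, α; β, 0])ᴴ * Aᴴ) = 0 ↔ α * conj α - β * conj β = 0 := by
    have h := cross_mul_mul (p := e3) (X := !![0, α; β, 0] * e3)
      (Y := e3 * !![0, α; β, 0]ᴴ) hAu hAHu
    simp only [← Matrix.mul_assoc] at h
    rw [h, conj_eq_zero, cross_e3_antidiag, I_div_two_mul_smul_eq_zero_iff one_ne_zero, neg_eq_zero]
  exact ⟨hf.trans hg.symm, hf, hg⟩

/-- The singular sets of the dual flat fronts `f = AAᴴ` and `g = Ae₃Aᴴ` coincide:
the area density `f' × f_z̄` vanishes iff `g' × g_z̄` does, and both are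
equivalent to `λ = |α|² - |β|² = 0` (given `A` invertible, `det A = 1`). -/
theorem singular_sets_coincide (A : Matrix (Fin 2) (Fin 2) ℂ) (hA : A.det = 1)
    (α β : ℂ) (hα : α ≠ 0) (hβ : β ≠ 0) :
    (cross (A * Aᴴ) (A * !![0, α; β, 0] * Aᴴ) (A * (!![0, α; β, 0])ᴴ * Aᴴ) = 0
      ↔ cross (A * e3 * Aᴴ) (A * !![0, α; β, 0] * e3 * Aᴴ)
          (A * e3 * (!![0, α; β, 0])ᴴ * Aᴴ) = 0) ∧
    (cross (A * Aᴴ) (A * !![0, α; β, 0] * Aᴴ) (A * (!![0, α; β, 0])ᴴ * Aᴴ) = 0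
      ↔ α * conj α - β * conj β = 0) ∧
    (cross (A * e3 * Aᴴ) (A * !![0, α; β, 0] * e3 * Aᴴ)
          (A * e3 * (!![0, α; β, 0])ᴴ * Aᴴ) = 0
      ↔ α * conj α - β * conj β = 0) :=
  singular_sets_coincide_general A hA α β
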